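/- Let (X,d) be a quasi-metric space with quasi-metric constant γ ≥ 1 and let x₀ ∈ X. For any β > 0 there exists a constant ω = ω(γ,β) > 1 such that for every bounded function u : B₁(x₀) → ℝ with u(x₀) ≥ 1, there exist a point x ∈ B₁(x₀) and a radius r > 0 such that B_r(x) ⊆ B₁(x₀), r^β · sup_{B_r(x)} u ≤ ω, and r^β · u(x) ≥ 1/ω. -/

import Mathlib

open Set

set_option maxHeartbeats 1000000

/-- Auxiliary "target value" sequence for the point-picking iteration. -/
noncomputable def KSM (ω : ℝ) (rr : ℕ → ℝ) (β : ℝ) : ℕ → ℝ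
  | 0 => 1
  | (j+1) => ω / (rr j) ^ β

/-- Abstract Krylov–Safonov covering argument.
Let `(X,d)` be a quasi-metric space with quasi-metric constant `γ ≥ 1`. For any `β > 0`
there exists `ω = ω(γ,β) > 1` such that for every `x₀ ∈ X` and every bounded
`u : B₁(x₀) → ℝ` with `u(x₀) ≥ 1`, there exist `x ∈ B₁(x₀)` and `r > 0` with
`B_r(x) ⊆ B₁(x₀)`, `r^β ⬝ sup_{B_r(x)} u ≤ ω` and `r^β ⬝ u(x) ≥ 1/ω`. -/
theorem krylov_safonov {X : Type*} (d : X → X → ℝ) (γ : ℝ) (hγ : 1 ≤ γ)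
    (hd_nonneg : ∀ x y, 0 ≤ d x y)
    (hd_symm : ∀ x y, d x y = d y x)
    (hd_eq : ∀ x y, d x y = 0 ↔ x = y)
    (hd_tri : ∀ z₁ z₂ z₃, d z₁ z₃ ≤ γ * (d z₁ z₂ + d z₂ z₃))
    (β : ℝ) (hβ : 0 < β) :
    ∃ ω : ℝ, 1 < ω ∧
      ∀ (x₀ : X) (u : X → ℝ),
        (∃ C : ℝ, ∀ y, d x₀ y < 1 → |u y| ≤ C) →
        1 ≤ u x₀ →
        ∃ (x : X) (r : ℝ), 0 < r ∧ d x₀ x < 1 ∧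
          (∀ y, d x y < r → d x₀ y < 1) ∧
          (∀ y, d x y < r → r ^ β * u y ≤ ω) ∧
          1 / ω ≤ r ^ β * u x := by
  have hγ0 : (0:ℝ) < γ := lt_of_lt_of_le one_pos hγ
  have h4 : (1:ℝ) ≤ 4*γ^2 := by nlinarith
  have h2 : (1:ℝ) ≤ 2*γ^2 := by nlinarith
  obtain ⟨r0, hr0def⟩ : ∃ r0 : ℝ, r0 = (4*γ^2)⁻¹ := ⟨_, rfl⟩
  obtain ⟨lam, hlamdef⟩ : ∃ lam : ℝ, lam = (2*γ^2)⁻¹ := ⟨_, rfl⟩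
  have hr0 : 0 < r0 := by rw [hr0def]; positivity
  have hlam : 0 < lam := by rw [hlamdef]; positivity
  have hlam1 : lam < 1 := by
    rw [hlamdef]
    rw [inv_lt_one_iff₀]
    right; nlinarith
  have hApos : (0:ℝ) < (4*γ^2)^β := Real.rpow_pos_of_pos (by positivity) β
  have hBpos : (0:ℝ) < (2*γ^2)^β := Real.rpow_pos_of_pos (by positivity) β
  have hA : (1:ℝ) ≤ (4*γ^2)^β := Real.one_le_rpow h4 hβ.le
  have hB : (1:ℝ) ≤ (2*γ^2)^β := Real.one_le_rpow h2 hβ.le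
  obtain ⟨ω, hωdef⟩ : ∃ w : ℝ, w = 2 * (4*γ^2)^β * (2*γ^2)^β := ⟨_, rfl⟩
  have hωA : (4*γ^2)^β ≤ ω := by rw [hωdef]; nlinarith
  have hωB : (2*γ^2)^β ≤ ω := by rw [hωdef]; nlinarith
  have hω1 : 1 < ω := by rw [hωdef]; nlinarith
  have hω0 : 0 < ω := lt_trans one_pos hω1
  have hr0β : r0 ^ β = ((4*γ^2)^β)⁻¹ := by
    rw [hr0def, ← Real.inv_rpow (by positivity)]
  have hlamβ : lam ^ β = ((2*γ^2)^β)⁻¹ := by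
    rw [hlamdef, ← Real.inv_rpow (by positivity)]
  have key1 : 1/ω ≤ r0 ^ β := by
    rw [hr0β, one_div, inv_le_inv₀ hω0 hApos]
    exact hωA
  have key2 : 1/ω ≤ ω * lam ^ β := by
    have h1 : ω⁻¹ ≤ lam ^ β := by
      rw [hlamβ, inv_le_inv₀ hω0 hBpos]; exact hωB
    have : 1/ω ≤ ω * ω⁻¹ := by
      rw [mul_inv_cancel₀ hω0.ne', one_div, inv_le_one_iff₀]
      right; exact hω1.le
    calc 1/ω ≤ ω * ω⁻¹ := this
      _ ≤ ω * lam ^ β := by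
        exact mul_le_mul_of_nonneg_left h1 hω0.le
  refine ⟨ω, hω1, ?_⟩
  intro x₀ u hbdd hu1
  obtain ⟨C, hC⟩ := hbdd
  by_contra hcon
  push_neg at hcon
  -- hcon : ∀ x r, 0 < r → d x₀ x < 1 → containment → sup-bound → r^β * u x < 1/ω
  obtain ⟨rr, hrrdef⟩ : ∃ rr : ℕ → ℝ, rr = fun k => r0 * lam ^ k := ⟨_, rfl⟩
  have hrrpos : ∀ k, 0 < rr k := by
    intro k; rw [hrrdef]; simp only []; positivity
  have hrrsucc : ∀ k, rr (k+1) = lam * rr k := by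
    intro k; simp only [hrrdef, pow_succ]; ring
  have hrr0 : rr 0 = r0 := by simp [hrrdef]
  have hrrle : ∀ k, rr k ≤ r0 := by
    intro k
    have h1 : lam ^ k ≤ 1 := pow_le_one₀ hlam.le hlam1.le
    calc rr k = r0 * lam ^ k := by rw [hrrdef]
      _ ≤ r0 * 1 := mul_le_mul_of_nonneg_left h1 hr0.le
      _ = r0 := mul_one r0
  have hlam2 : 2*γ^2*lam = 1 := by
    rw [hlamdef]; field_simp
  -- chain lemma
  have chain : ∀ k j (z : ℕ → X), (∀ i, i < k → d (z i) (z (i+1)) < rr (j+i)) →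
      d (z 0) (z k) ≤ 2*γ*rr j := by
    intro k
    induction k with
    | zero =>
      intro j z _
      have h0 : d (z 0) (z 0) = 0 := (hd_eq _ _).mpr rfl
      rw [h0]
      have := hrrpos j
      positivity
    | succ k ih =>
      intro j z hz
      have h1 : d (z 0) (z 1) < rr j := by
        have := hz 0 (Nat.succ_pos k)
        simpa using this
      have h2 : d (z 1) (z (k+1)) ≤ 2*γ*rr (j+1) := by
        have := ih (j+1) (fun i => z (i+1)) (by
          intro i hi
          have h := hz (i+1) (by omega)
          have hidx : j + (i+1) = (j+1) + i := by omega
          rw [hidx] at h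
          exact h)
        simpa using this
      have h3 : d (z 0) (z (k+1)) ≤ γ * (d (z 0) (z 1) + d (z 1) (z (k+1))) := hd_tri _ _ _
      rw [hrrsucc j] at h2
      have hγd1 : γ * d (z 0) (z 1) ≤ γ * rr j := mul_le_mul_of_nonneg_left h1.le hγ0.le
      have hγd2 : γ * d (z 1) (z (k+1)) ≤ γ * (2*γ*(lam * rr j)) :=
        mul_le_mul_of_nonneg_left h2 hγ0.le
      have hkey : γ * (2*γ*(lam * rr j)) = rr j := by
        have : γ * (2*γ*(lam * rr j)) = (2*γ^2*lam) * rr j := by ring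
        rw [this, hlam2, one_mul]
      have hrrj := hrrpos j
      nlinarith [h3]
  have hrpow : ∀ j, (rr (j+1))^β = lam^β * (rr j)^β := by
    intro j
    rw [hrrsucc j, Real.mul_rpow hlam.le (hrrpos j).le]
  have e1 : γ * (1/(2*γ)) = 1/2 := by field_simp
  have e2 : γ * r0 ≤ 1/4 := by
    rw [hr0def, inv_eq_one_div, mul_one_div, div_le_div_iff₀ (by positivity) (by norm_num)]
    nlinarith
  have hx2 : 2*γ*r0 = 1/(2*γ) := by
    rw [hr0def]; field_simp; ring
  -- the iteration claim
  have claim : ∀ k, ∃ z : ℕ → X, z 0 = x₀ ∧ (∀ i, i < k → d (z i) (z (i+1)) < rr i) ∧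
      KSM ω rr β k ≤ u (z k) := by
    intro k
    induction k with
    | zero =>
      exact ⟨fun _ => x₀, rfl, by intro i hi; omega, by simpa [KSM] using hu1⟩
    | succ k ih =>
      obtain ⟨z, hz0, hzchain, hzM⟩ := ih
      have hchain0 : ∀ i, i < k → d (z i) (z (i+1)) < rr (0+i) := by
        intro i hi; simpa using hzchain i hi
      have hdx : d x₀ (z k) ≤ 1/(2*γ) := by
        have := chain k 0 z hchain0
        rw [hz0, hrr0] at this
        linarith [hx2 ▸ this]
      have hdxlt1 : d x₀ (z k) < 1 := by
        have : 1/(2*γ) ≤ 1/2 := by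
          rw [div_le_div_iff₀ (by positivity) (by norm_num)]; nlinarith
        linarith
      have hcont : ∀ y, d (z k) y < rr k → d x₀ y < 1 := by
        intro y hy
        have htri := hd_tri x₀ (z k) y
        have q1 : γ * d x₀ (z k) ≤ γ * (1/(2*γ)) := mul_le_mul_of_nonneg_left hdx hγ0.le
        have q2 : γ * d (z k) y ≤ γ * rr k := mul_le_mul_of_nonneg_left hy.le hγ0.le
        have q3 : γ * rr k ≤ γ * r0 := mul_le_mul_of_nonneg_left (hrrle k) hγ0.le
        rw [e1] at q1
        linarith
      have hp : ∀ j, (0:ℝ) < (rr j)^β := fun j => Real.rpow_pos_of_pos (hrrpos j) β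
      have hlow : 1/ω ≤ (rr k)^β * u (z k) := by
        cases k with
        | zero =>
          have hu : (1:ℝ) ≤ u (z 0) := by simpa [KSM] using hzM
          have : r0^β ≤ r0^β * u (z 0) := le_mul_of_one_le_right (by positivity) hu
          rw [hrr0]
          linarith
        | succ j =>
          have hzM' : ω / (rr j)^β ≤ u (z (j+1)) := by simpa [KSM] using hzM
          have hm : (rr (j+1))^β * (ω / (rr j)^β) ≤ (rr (j+1))^β * u (z (j+1)) :=
            mul_le_mul_of_nonneg_left hzM' (hp (j+1)).le
          have e : (rr (j+1))^β * (ω / (rr j)^β) = ω * lam^β := by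
            rw [hrpow j, mul_assoc, mul_comm ((rr j)^β) (ω / (rr j)^β),
              div_mul_cancel₀ ω (hp j).ne']
            ring
          rw [e] at hm
          linarith
      have hs : ∃ y, d (z k) y < rr k ∧ ω < (rr k)^β * u y := by
        by_contra hsup
        push_neg at hsup
        have := hcon (z k) (rr k) (hrrpos k) hdxlt1 hcont hsup
        exact absurd this (not_lt.mpr hlow)
      obtain ⟨y, hy1, hy2⟩ := hs
      refine ⟨fun i => if i ≤ k then z i else y, ?_, ?_, ?_⟩
      · simp [hz0]
      · intro i hi
        show d (if i ≤ k then z i else y) (if i + 1 ≤ k then z (i+1) else y) < rr i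
        rcases Nat.lt_or_ge i k with hik | hik
        · rw [if_pos (by omega : i ≤ k), if_pos (by omega : i + 1 ≤ k)]
          exact hzchain i hik
        · have hik' : i = k := by omega
          subst hik'
          rw [if_pos (le_refl i), if_neg (by omega : ¬ i + 1 ≤ i)]
          exact hy1
      · show KSM ω rr β (k+1) ≤ u (if k + 1 ≤ k then z (k+1) else y)
        rw [if_neg (by omega : ¬ k + 1 ≤ k)]
        show ω / (rr k)^β ≤ u y
        rw [div_le_iff₀ (hp k), mul_comm]
        exact hy2.le
  -- final contradiction via boundedness
  have hrrβ : ∀ k, (rr k)^β = r0^β * (lam^β)^k := by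
    intro k
    induction k with
    | zero => rw [hrr0]; simp
    | succ k ih => rw [hrpow k, ih, pow_succ]; ring
  have ha : (0:ℝ) < lam^β := Real.rpow_pos_of_pos hlam β
  have ha1 : lam^β < 1 := Real.rpow_lt_one hlam.le hlam1 hβ
  have hq1 : 1 < (lam^β)⁻¹ := one_lt_inv₀ ha |>.mpr ha1
  have hr0βpos : (0:ℝ) < r0^β := Real.rpow_pos_of_pos hr0 β
  obtain ⟨n, hn⟩ := pow_unbounded_of_one_lt (C * r0^β / ω) hq1
  obtain ⟨z, hz0, hzchain, hzM⟩ := claim (n+1)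
  have hchain0 : ∀ i, i < n+1 → d (z i) (z (i+1)) < rr (0+i) := by
    intro i hi; simpa using hzchain i hi
  have hdx : d x₀ (z (n+1)) ≤ 1/(2*γ) := by
    have := chain (n+1) 0 z hchain0
    rw [hz0, hrr0] at this
    linarith [hx2 ▸ this]
  have hdxlt1 : d x₀ (z (n+1)) < 1 := by
    have : 1/(2*γ) ≤ 1/2 := by
      rw [div_le_div_iff₀ (by positivity) (by norm_num)]; nlinarith
    linarith
  have hub : u (z (n+1)) ≤ C := (abs_le.mp (hC (z (n+1)) hdxlt1)).2
  have hzM' : ω / (rr n)^β ≤ u (z (n+1)) := by simpa [KSM] using hzM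
  -- show C < ω / (rr n)^β
  have hpn : (0:ℝ) < (rr n)^β := Real.rpow_pos_of_pos (hrrpos n) β
  have hCn : C < ω / (rr n)^β := by
    rw [lt_div_iff₀ hpn, hrrβ n]
    have hpow : (0:ℝ) < (lam^β)^n := by positivity
    have h1 : C * r0^β < ω * ((lam^β)⁻¹)^n := by
      have := mul_lt_mul_of_pos_right hn hω0
      calc C * r0^β = C * r0^β / ω * ω := by field_simp
        _ < ((lam^β)⁻¹)^n * ω := this
        _ = ω * ((lam^β)⁻¹)^n := by ring
    have h2 : C * r0^β * (lam^β)^n < ω * ((lam^β)⁻¹)^n * (lam^β)^n :=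
      mul_lt_mul_of_pos_right h1 hpow
    have h3 : ω * ((lam^β)⁻¹)^n * (lam^β)^n = ω := by
      rw [inv_pow]
      field_simp
    calc C * (r0^β * (lam^β)^n) = C * r0^β * (lam^β)^n := by ring
      _ < ω := by rw [← h3]; exact h2
  linarith
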